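/- Let y and z be nonzero complex numbers with z + 1/z ≠ y + 1/y, and suppose y is not an integer power of q (so that (qy, q/y; q)_n ≠ 0 for all n). Then ∑_{n=0}^{∞} q^n (z, z^{-1}; q)_n / (qy, q/y; q)_n = C(z,y) · ( (1−y)(1−y^{-1}) − (z, z^{-1}; q)_∞ / (qy, q/y; q)_∞ ). -/

import Mathlib

/-- Finite q-Pochhammer symbol `(a; q)_n = ∏_{j=0}^{n-1} (1 - a q^j)`. -/
noncomputable def qPoch (q a : ℂ) (n : ℕ) : ℂ := ∏ j ∈ Finset.range n, (1 - a * q ^ j)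

/-- Infinite q-Pochhammer symbol `(a; q)_∞ = ∏_{j=0}^{∞} (1 - a q^j)`. -/
noncomputable def qPochInf (q a : ℂ) : ℂ := ∏' j : ℕ, (1 - a * q ^ j)

/-- `C(z,y) = 1/(z + 1/z - y - 1/y)`. -/
noncomputable def Ccoef (z y : ℂ) : ℂ := (z + z⁻¹ - y - y⁻¹)⁻¹

/-!
With `r_n = (z, z⁻¹; q)_n / (qy, q/y; q)_n` and `b_n = (1 - y qⁿ)(1 - qⁿ/y) r_n`, one has
`b_{n+1} = (1 - z qⁿ)(1 - qⁿ/z) r_n`, and hence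
`b_n - b_{n+1} = (z + 1/z - y - 1/y) qⁿ r_n`. The series therefore telescopes to
`C(z,y) (b_0 - lim b_n)`, where `b_0 = (1 - y)(1 - 1/y)` and `b_n` tends to the quotient of the
infinite products.
-/

open Filter Topology

theorem qPoch_succ (q a : ℂ) (n : ℕ) : qPoch q a (n + 1) = qPoch q a n * (1 - a * q ^ n) :=
  Finset.prod_range_succ _ _

section QPochhammer

variable {q : ℂ}

theorem summable_pow_mul_of_tendsto (hq : ‖q‖ < 1) {r : ℕ → ℂ} {A : ℂ}
    (hr : Tendsto r atTop (𝓝 A)) : Summable fun n => q ^ n * r n := by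
  refine Summable.of_norm_bounded_eventually_nat
    ((summable_geometric_of_lt_one (norm_nonneg q) hq).mul_left (‖A‖ + 1)) ?_
  filter_upwards [hr.norm.eventually_le_const (lt_add_one ‖A‖)] with n hn
  rw [norm_mul, norm_pow, mul_comm]
  gcongr

theorem summable_norm_mul_pow (hq : ‖q‖ < 1) (a : ℂ) : Summable fun n : ℕ => ‖a * q ^ n‖ := by
  simpa only [norm_mul, norm_pow] using
    (summable_geometric_of_lt_one (norm_nonneg q) hq).mul_left ‖a‖

theorem multipliable_one_sub_mul_pow (hq : ‖q‖ < 1) (a : ℂ) :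
    Multipliable fun n : ℕ => 1 - a * q ^ n := by
  simpa only [sub_eq_add_neg] using
    multipliable_one_add_of_summable (f := fun n => -(a * q ^ n))
      (by simpa only [norm_neg] using summable_norm_mul_pow hq a)

theorem tendsto_qPoch (hq : ‖q‖ < 1) (a : ℂ) :
    Tendsto (qPoch q a) atTop (𝓝 (qPochInf q a)) :=
  (multipliable_one_sub_mul_pow hq a).hasProd.tendsto_prod_nat

theorem qPochInf_ne_zero (hq : ‖q‖ < 1) {a : ℂ} (ha : ∀ n : ℕ, 1 - a * q ^ n ≠ 0) :
    qPochInf q a ≠ 0 := by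
  simpa only [qPochInf, sub_eq_add_neg] using
    tprod_one_add_ne_zero_of_summable (f := fun n => -(a * q ^ n))
      (by simpa only [sub_eq_add_neg] using ha)
      (by simpa only [norm_neg] using summable_norm_mul_pow hq a)

theorem qPoch_ne_zero {a : ℂ} (ha : ∀ n : ℕ, 1 - a * q ^ n ≠ 0) (n : ℕ) : qPoch q a n ≠ 0 :=
  Finset.prod_ne_zero_iff.mpr fun j _ => ha j

theorem one_sub_mul_mul_pow_ne_zero {y : ℂ} (hy : ∀ n : ℤ, y ≠ q ^ n) (j : ℕ) :
    1 - q * y * q ^ j ≠ 0 := by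
  intro h
  apply hy (-(j + 1 : ℕ))
  rw [zpow_neg, zpow_natCast]
  exact eq_inv_of_mul_eq_one_left (by linear_combination -h)

theorem inv_ne_zpow {y : ℂ} (hy : ∀ n : ℤ, y ≠ q ^ n) (n : ℤ) : y⁻¹ ≠ q ^ n := by
  rw [Ne, inv_eq_iff_eq_inv, ← zpow_neg]
  exact hy (-n)

end QPochhammer

noncomputable def qRatio (q y z : ℂ) (n : ℕ) : ℂ :=
  qPoch q z n * qPoch q z⁻¹ n / (qPoch q (q * y) n * qPoch q (q * y⁻¹) n)

theorem qRatio_zero (q y z : ℂ) : qRatio q y z 0 = 1 := by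
  simp [qRatio, qPoch]

section Telescoping

variable {q y z : ℂ} (hy₁ : ∀ j : ℕ, 1 - q * y * q ^ j ≠ 0) (hy₂ : ∀ j : ℕ, 1 - q * y⁻¹ * q ^ j ≠ 0)
include hy₁ hy₂

theorem tendsto_qRatio (hq : ‖q‖ < 1) :
    Tendsto (qRatio q y z) atTop
      (𝓝 (qPochInf q z * qPochInf q z⁻¹ / (qPochInf q (q * y) * qPochInf q (q * y⁻¹)))) :=
  ((tendsto_qPoch hq z).mul (tendsto_qPoch hq z⁻¹)).div
    ((tendsto_qPoch hq _).mul (tendsto_qPoch hq _))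
    (mul_ne_zero (qPochInf_ne_zero hq hy₁) (qPochInf_ne_zero hq hy₂))

theorem qRatio_succ (n : ℕ) :
    (1 - y * q ^ (n + 1)) * (1 - y⁻¹ * q ^ (n + 1)) * qRatio q y z (n + 1) =
      (1 - z * q ^ n) * (1 - z⁻¹ * q ^ n) * qRatio q y z n := by
  have hQ₁ := qPoch_ne_zero hy₁ n
  have hQ₂ := qPoch_ne_zero hy₂ n
  have hu := hy₁ n
  have hv := hy₂ n
  rw [show (1 - y * q ^ (n + 1)) * (1 - y⁻¹ * q ^ (n + 1)) =
    (1 - q * y * q ^ n) * (1 - q * y⁻¹ * q ^ n) by ring]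
  simp only [qRatio, qPoch_succ]
  -- as atoms, the new denominator factors stay recognisably nonzero for `field_simp`
  generalize 1 - q * y * q ^ n = u at hu ⊢
  generalize 1 - q * y⁻¹ * q ^ n = v at hv ⊢
  field_simp

theorem sub_qRatio_succ (hy : y ≠ 0) (hz : z ≠ 0) (n : ℕ) :
    (1 - y * q ^ n) * (1 - y⁻¹ * q ^ n) * qRatio q y z n -
        (1 - y * q ^ (n + 1)) * (1 - y⁻¹ * q ^ (n + 1)) * qRatio q y z (n + 1) =
      (z + z⁻¹ - y - y⁻¹) * (q ^ n * qRatio q y z n) := by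
  rw [qRatio_succ hy₁ hy₂]
  field_simp
  ring

theorem sum_range_pow_mul_qRatio (hy : y ≠ 0) (hz : z ≠ 0) (hyz : z + z⁻¹ ≠ y + y⁻¹) (N : ℕ) :
    ∑ n ∈ Finset.range N, q ^ n * qRatio q y z n =
      Ccoef z y * ((1 - y) * (1 - y⁻¹) -
        (1 - y * q ^ N) * (1 - y⁻¹ * q ^ N) * qRatio q y z N) := by
  have hK : z + z⁻¹ - y - y⁻¹ ≠ 0 := fun h => hyz (by linear_combination h)
  have := Finset.sum_range_sub' (fun n => (1 - y * q ^ n) * (1 - y⁻¹ * q ^ n) * qRatio q y z n) N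
  simp only [sub_qRatio_succ hy₁ hy₂ hy hz, ← Finset.mul_sum, pow_zero, mul_one,
    qRatio_zero] at this
  rw [← this, ← mul_assoc, Ccoef, inv_mul_cancel₀ hK, one_mul]

theorem hasSum_pow_mul_qRatio (hq : ‖q‖ < 1) (hy : y ≠ 0) (hz : z ≠ 0)
    (hyz : z + z⁻¹ ≠ y + y⁻¹) :
    HasSum (fun n => q ^ n * qRatio q y z n)
      (Ccoef z y * ((1 - y) * (1 - y⁻¹) -
        qPochInf q z * qPochInf q z⁻¹ / (qPochInf q (q * y) * qPochInf q (q * y⁻¹)))) := by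
  have hratio := tendsto_qRatio hy₁ hy₂ (z := z) hq
  have hpow : Tendsto (fun n => q ^ n) atTop (𝓝 0) :=
    tendsto_pow_atTop_nhds_zero_of_norm_lt_one hq
  have hfactor (a : ℂ) : Tendsto (fun n => 1 - a * q ^ n) atTop (𝓝 1) := by
    simpa using (hpow.const_mul a).const_sub 1
  have htail := ((hfactor y).mul (hfactor y⁻¹)).mul hratio
  rw [one_mul, one_mul] at htail
  rw [(summable_pow_mul_of_tendsto hq hratio).hasSum_iff_tendsto_nat,
    funext (sum_range_pow_mul_qRatio hy₁ hy₂ hy hz hyz)]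
  exact (htail.const_sub _).const_mul _

end Telescoping

theorem sum_single_eq_C_mul
    (q y z : ℂ) (hq : ‖q‖ < 1) (hy : y ≠ 0) (hz : z ≠ 0)
    (hyz : z + z⁻¹ ≠ y + y⁻¹) (hypow : ∀ n : ℤ, y ≠ q ^ n) :
    ∑' n : ℕ, q ^ n * (qPoch q z n * qPoch q z⁻¹ n) /
        (qPoch q (q * y) n * qPoch q (q * y⁻¹) n)
      = Ccoef z y * ((1 - y) * (1 - y⁻¹) -
          (qPochInf q z * qPochInf q z⁻¹) /
            (qPochInf q (q * y) * qPochInf q (q * y⁻¹))) := by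
  rw [tsum_congr fun n => mul_div_assoc _ _ _]
  exact (hasSum_pow_mul_qRatio (one_sub_mul_mul_pow_ne_zero hypow)
    (one_sub_mul_mul_pow_ne_zero (inv_ne_zpow hypow)) hq hy hz hyz).tsum_eq
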